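/- arXiv:0801.3331 — 5 statements merged into one kernel-verified Lean document; each statement's English description precedes it below -/
import Mathlib

section
/- Let ψ(x) = C·x with C = exp(−6). Then for all integers 1 ≤ i < j ≤ d one has (j−i+1)^{−(j−i)/2} · (1 − (f_{ψ,d}(j)/f_{ψ,d}(i))²)_+^{(j−i)/2} · ∏_{k=i}^{j} (f_{ψ,d}(i)/f_{ψ,d}(k)) ≤ (2πe(√e+1)²)^{−(j−i)/2}. -/
/-!
Write `w m = ψ(m)^{m/2}`. The recursion telescopes: with `r = f j / f i`,
`∏_{k=i}^{j} f i / f k = w (d-i+1) / w (d-j+1) · r^(d-j)`, where `w 1` is replaced by `1` when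
`j = d`. Put `n = j - i` and `m = d - j`. Weighted AM-GM (Gibbs' inequality) gives
`(1 - r²)^n r^(2m) ≤ n^n m^m / (n+m)^(n+m)`, which removes `r`. The increment
`t log t - (t-1) log (t-1)` of `t log t` grows by at most `1` per unit step once `t ≥ 2`;
with these two bounds the logarithm of the left-hand side is at most `-5n/2`.
It remains to note `2πe(√e + 1)² ≤ e⁵`.
-/

open Real Finset

lemma prod_Icc_div_eq_of_pow_eq_mul_prod {K : Type*} [Field K] {f : ℕ → K} {i j d : ℕ}
    {wi wj : K} (hij : i ≤ j) (hjd : j ≤ d) (hf : ∀ k ∈ Icc i d, f k ≠ 0) (hwj : wj ≠ 0)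
    (hi : f i ^ (d - i) = wi * ∏ k ∈ Ioc i d, f k)
    (hj : f j ^ (d - j) = wj * ∏ k ∈ Ioc j d, f k) :
    ∏ k ∈ Icc i j, f i / f k = wi / wj * (f j / f i) ^ (d - j) := by
  have hfi : f i ≠ 0 := hf i (by simp; omega)
  have hP : ∏ k ∈ Ioc i j, f k ≠ 0 :=
    prod_ne_zero_iff.2 fun k hk => hf k (by simp at hk ⊢; omega)
  rw [← prod_Ioc_consecutive f hij hjd] at hi
  rw [Icc_eq_cons_Ioc hij, prod_cons, div_self hfi, one_mul, prod_div_distrib, prod_const,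
    Nat.card_Ioc, div_pow, hj]
  field_simp
  rw [← pow_add, show j - i + (d - j) = d - i by omega, hi]
  ring

lemma two_pi_mul_exp_one_mul_sqrt_exp_one_add_one_sq_le_exp_five :
    2 * π * exp 1 * (√(exp 1) + 1) ^ 2 ≤ exp 5 := by
  have hsqrt : √(exp 1) < 1.6488 := by
    rw [sqrt_lt' (by norm_num)]
    linarith [exp_one_lt_d9]
  have he5 : (2.7182818283 : ℝ) ^ 5 ≤ exp 5 := by
    rw [show (5 : ℝ) = (5 : ℕ) * 1 by norm_num, exp_nat_mul]
    exact pow_le_pow_left₀ (by norm_num) exp_one_gt_d9.le 5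
  have hpi_e : 2 * π * exp 1 < 17.126 := by nlinarith [pi_lt_d2, exp_one_lt_d9, pi_pos]
  nlinarith [sqrt_nonneg (exp 1), exp_pos 1, pi_pos]

noncomputable def mulLogIncrement (t : ℝ) : ℝ := t * log t - (t - 1) * log (t - 1)

lemma mulLogIncrement_add_one_le {t : ℝ} (ht : 2 ≤ t) :
    mulLogIncrement (t + 1) ≤ mulLogIncrement t + 1 := by
  have ht0 : 0 < t := by linarith
  have hup : log (t + 1) - log t ≤ 1 / t := by
    have := log_le_sub_one_of_pos (show 0 < (t + 1) / t by positivity)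
    rw [log_div (by positivity) ht0.ne'] at this
    linarith [show (t + 1) / t - 1 = 1 / t by field_simp; ring]
  have hdown : log (t - 1) - log t ≤ -(1 / t) := by
    have := log_le_sub_one_of_pos (show 0 < (t - 1) / t by apply div_pos <;> linarith)
    rw [log_div (by linarith) ht0.ne'] at this
    linarith [show (t - 1) / t - 1 = -(1 / t) by field_simp; ring]
  have h2t : 2 / t ≤ 1 := by rw [div_le_one ht0]; exact ht
  unfold mulLogIncrement
  rw [add_sub_cancel_right]
  linarith [mul_le_mul_of_nonneg_left hup (by linarith : 0 ≤ t + 1),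
    mul_le_mul_of_nonneg_left hdown (by linarith : 0 ≤ t - 1),
    show (t + 1) * (1 / t) + (t - 1) * -(1 / t) = 2 / t by field_simp; ring]

lemma mulLogIncrement_add_natCast_le {t : ℝ} (ht : 2 ≤ t) (n : ℕ) :
    mulLogIncrement (t + n) ≤ mulLogIncrement t + n := by
  induction n with
  | zero => simp
  | succ n ih =>
    have := mulLogIncrement_add_one_le (t := t + n) (by linarith [n.cast_nonneg' (α := ℝ)])
    push_cast
    rw [← add_assoc]
    linarith

lemma mul_log_add_mul_log_le {p q a b : ℝ} (hp : 0 < p) (hq : 0 < q) (ha : 0 < a)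
    (hb : 0 < b) (hab : a + b = 1) :
    p * log a + q * log b ≤ p * log p + q * log q - (p + q) * log (p + q) := by
  have hpq : 0 < p + q := by linarith
  have tangent : ∀ {s w : ℝ}, 0 < s → 0 < w →
      w * (log s + log (p + q) - log w) ≤ s * (p + q) - w := fun {s w} hs hw => by
    have := log_le_sub_one_of_pos (show 0 < s * (p + q) / w by positivity)
    rw [log_div (by positivity) hw.ne', log_mul hs.ne' hpq.ne'] at this
    calc w * (log s + log (p + q) - log w) ≤ w * (s * (p + q) / w - 1) :=
          mul_le_mul_of_nonneg_left this hw.le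
      _ = s * (p + q) - w := by field_simp
  have := add_le_add (tangent ha hp) (tangent hb hq)
  have hsum : a * (p + q) - p + (b * (p + q) - q) = 0 := by linear_combination (p + q) * hab
  linarith

noncomputable def shapeWeight (m : ℝ) : ℝ := (exp (-6) * m) ^ (m / 2)

lemma shapeWeight_pos {m : ℝ} (hm : 0 < m) : 0 < shapeWeight m := by
  unfold shapeWeight; positivity

lemma log_shapeWeight {m : ℝ} (hm : 0 < m) : log (shapeWeight m) = m / 2 * (log m - 6) := by
  rw [shapeWeight, log_rpow (by positivity), log_mul (exp_ne_zero _) hm.ne', log_exp]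
  ring

lemma rpow_mul_shapeWeight_div_mul_pow_le (n m : ℕ) (hn : 0 < n) (hm : 0 < m) {r : ℝ}
    (hr0 : 0 < r) (hr1 : r < 1) :
    ((n : ℝ) + 1) ^ (-((n : ℝ) / 2)) * (1 - r ^ 2) ^ ((n : ℝ) / 2) *
        (shapeWeight (n + m + 1) / shapeWeight (m + 1) * r ^ m) ≤ exp (-(5 / 2 * n)) := by
  have hN : (0 : ℝ) < n := by exact_mod_cast hn
  have hM : (1 : ℝ) ≤ m := by exact_mod_cast hm
  have hr2 : 0 < 1 - r ^ 2 := by nlinarith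
  have hwi := shapeWeight_pos (m := n + m + 1) (by positivity)
  have hwj := shapeWeight_pos (m := m + 1) (by positivity)
  rw [← log_le_iff_le_exp (by positivity), log_mul (by positivity) (by positivity),
    log_mul (by positivity) (by positivity), log_mul (by positivity) (by positivity),
    log_div hwi.ne' hwj.ne', log_rpow (by positivity), log_rpow hr2, log_pow,
    log_shapeWeight (by positivity), log_shapeWeight (by positivity)]
  have hGibbs := mul_log_add_mul_log_le (q := m) hN (by linarith) hr2 (by positivity)
    (sub_add_cancel 1 (r ^ 2))
  rw [log_pow] at hGibbs
  have hG := mulLogIncrement_add_natCast_le (t := m + 1) (by linarith) n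
  simp only [mulLogIncrement, add_sub_cancel_right] at hG
  rw [show (m : ℝ) + 1 + n - 1 = n + m by ring, show (m : ℝ) + 1 + n = n + m + 1 by ring] at hG
  have hlog : (n : ℝ) * log n ≤ n * log (n + 1) :=
    mul_le_mul_of_nonneg_left (log_le_log hN (by linarith)) hN.le
  push_cast at hGibbs
  linarith

lemma rpow_mul_shapeWeight_le (n : ℕ) {r : ℝ} (hr0 : 0 < r) (hr1 : r < 1) :
    ((n : ℝ) + 1) ^ (-((n : ℝ) / 2)) * (1 - r ^ 2) ^ ((n : ℝ) / 2) * shapeWeight (n + 1) ≤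
      exp (-(5 / 2 * n)) := by
  have hr2 : 0 < 1 - r ^ 2 := by nlinarith
  have hw := shapeWeight_pos (m := n + 1) (by positivity)
  rw [← log_le_iff_le_exp (by positivity), log_mul (by positivity) (by positivity),
    log_mul (by positivity) (by positivity), log_rpow (by positivity), log_rpow hr2,
    log_shapeWeight (by positivity)]
  have hz : log (1 - r ^ 2) ≤ 0 := log_nonpos hr2.le (by nlinarith)
  have hlog : log ((n : ℝ) + 1) ≤ n := by
    linarith [log_le_sub_one_of_pos (by positivity : (0 : ℝ) < n + 1)]
  nlinarith [n.cast_nonneg (α := ℝ)]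

theorem worst_case_shape_inequality_general
    (d : ℕ) (f : ℕ → ℝ)
    (hfpos : ∀ i, 1 ≤ i → i ≤ d → 0 < f i)
    (hrec : ∀ i, 1 ≤ i → i < d →
      f i ^ (d - i) =
        (Real.exp (-6) * ((d : ℝ) - (i : ℝ) + 1)) ^ (((d : ℝ) - (i : ℝ) + 1) / 2) *
          ∏ k ∈ Finset.Icc (i + 1) d, f k)
    (i j : ℕ) (hi : 1 ≤ i) (hij : i < j) (hjd : j ≤ d) :
    ((j : ℝ) - (i : ℝ) + 1) ^ (-(((j : ℝ) - (i : ℝ)) / 2)) *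
        (max (1 - (f j / f i) ^ 2) 0) ^ (((j : ℝ) - (i : ℝ)) / 2) *
        ∏ k ∈ Finset.Icc i j, (f i / f k) ≤
      (2 * Real.pi * Real.exp 1 * (Real.sqrt (Real.exp 1) + 1) ^ 2)
        ^ (-(((j : ℝ) - (i : ℝ)) / 2)) := by
  have hrec_weight : ∀ k, 1 ≤ k → k < d →
      f k ^ (d - k) = shapeWeight ((d - k : ℕ) + 1) * ∏ l ∈ Ioc k d, f l := fun k hk hkd => by
    rw [hrec k hk hkd, ← Icc_add_one_left_eq_Ioc, Nat.cast_sub hkd.le]; rfl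
  have hf : ∀ k ∈ Icc i d, f k ≠ 0 := fun k hk => (hfpos k (by grind) (mem_Icc.1 hk).2).ne'
  obtain ⟨n, rfl⟩ := Nat.exists_eq_add_of_le hij.le
  obtain ⟨m, rfl⟩ := Nat.exists_eq_add_of_le hjd
  have hn : 0 < n := by omega
  rw [show ((i + n : ℕ) : ℝ) - i = n by push_cast; ring]
  set r := f (i + n) / f i with hr
  have hr0 : 0 < r := div_pos (hfpos _ (by omega) (by omega)) (hfpos i hi (by omega))
  rcases le_or_gt 1 r with hr1 | hr1
  · rw [max_eq_right (by nlinarith), zero_rpow (by positivity), mul_zero, zero_mul]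
    positivity
  rw [max_eq_left (by nlinarith)]
  calc _ ≤ exp (-(5 / 2 * n)) := ?_
    _ = exp 5 ^ (-((n : ℝ) / 2)) := by rw [← exp_mul]; ring_nf
    _ ≤ _ := rpow_le_rpow_of_nonpos (by positivity)
        two_pi_mul_exp_one_mul_sqrt_exp_one_add_one_sq_le_exp_five (neg_nonpos.2 (by positivity))
  have hwi :
      f i ^ (i + n + m - i) = shapeWeight (n + m + 1) * ∏ k ∈ Ioc i (i + n + m), f k := by
    rw [hrec_weight i hi (by omega), show i + n + m - i = n + m by omega, Nat.cast_add]
  obtain rfl | hm := m.eq_zero_or_pos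
  · simp only [add_zero, Nat.cast_zero] at hf hwi
    rw [prod_Icc_div_eq_of_pow_eq_mul_prod (by omega) le_rfl hf one_ne_zero hwi (by simp), ← hr]
    simpa using rpow_mul_shapeWeight_le n hr0 hr1
  · rw [prod_Icc_div_eq_of_pow_eq_mul_prod (by omega) (by omega) hf
      (shapeWeight_pos (by positivity)).ne' hwi (hrec_weight _ (by omega) (by omega)), ← hr]
    simpa using rpow_mul_shapeWeight_div_mul_pow_le n m hn hm hr0 hr1

/-- Theorem 2 of the paper. For `ψ(x) = C·x` with `C = exp (-6)` and
`f = f_{ψ,d}` (characterised by `f d = 1` and the recursion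
`f(i)^{d-i} = ψ(d-i+1)^{(d-i+1)/2} ∏_{k=i+1}^d f(k)`), one has, for all `1 ≤ i < j ≤ d`,
`(j-i+1)^{-(j-i)/2} (1-(f j/f i)²)₊^{(j-i)/2} ∏_{k=i}^j (f i/f k) ≤ (2πe(√e+1)²)^{-(j-i)/2}`. -/
theorem worst_case_shape_inequality
    (d : ℕ) (f : ℕ → ℝ)
    (hfpos : ∀ i, 1 ≤ i → i ≤ d → 0 < f i)
    (hfd : f d = 1)
    (hrec : ∀ i, 1 ≤ i → i < d →
      f i ^ (d - i) =
        (Real.exp (-6) * ((d : ℝ) - (i : ℝ) + 1)) ^ (((d : ℝ) - (i : ℝ) + 1) / 2) *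
          ∏ k ∈ Finset.Icc (i + 1) d, f k)
    (i j : ℕ) (hi : 1 ≤ i) (hij : i < j) (hjd : j ≤ d) :
    ((j : ℝ) - (i : ℝ) + 1) ^ (-(((j : ℝ) - (i : ℝ)) / 2)) *
        (max (1 - (f j / f i) ^ 2) 0) ^ (((j : ℝ) - (i : ℝ)) / 2) *
        ∏ k ∈ Finset.Icc i j, (f i / f k) ≤
      (2 * Real.pi * Real.exp 1 * (Real.sqrt (Real.exp 1) + 1) ^ 2)
        ^ (-(((j : ℝ) - (i : ℝ)) / 2)) :=
  worst_case_shape_inequality_general d f hfpos hrec i j hi hij hjd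
end

section
/- Let C = exp(−6) and for integers 1 ≤ i ≤ d define g_d(i) = √(d−i+1) · ∏_{l=i+1}^{d} (C(d−l+2))^{1/(2(d−l+1))}. Then there exists a constant K > 0 such that for all integers d ≥ 1 and all i ∈ {1,…,d}, one has |2·log g_d(i) − (1 + log C)·log(d−i+1) − (log²(d−i+1))/2| ≤ K. -/
/-! Put `n = d - i`. Reindexing the product by `k = d - l` turns the quantity into
`log C * (H_n - log (n + 1)) + (∑_{k<n} log (k + 2) / (k + 1) - log² (n + 1) / 2)`.
The first bracket lies in `[0, 1]` by the integral comparison bounds for harmonic numbers.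
The second bracket is a Riemann-sum error for `∫ log x / x = log² x / 2`: its increments are
nonnegative and at most `log (n + 2) / ((n + 1) (n + 2)) + 1 / (2 (n + 1)²) = O(n^{-3/2})`,
which telescopes against `6 / √(n + 1) + 1 / (n + 1)`, so it lies in `[0, 7]`. -/

open Real Finset

lemma log_add_one_sub_log_mem_Icc {x : ℝ} (hx : 0 < x) :
    log (x + 1) - log x ∈ Set.Icc (1 / (x + 1)) (1 / x) := by
  have hq : 0 < (x + 1) / x := by positivity
  rw [← log_div (by positivity) hx.ne']
  constructor
  · have h := one_sub_inv_le_log_of_pos hq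
    rwa [inv_div, one_sub_div (by positivity), add_sub_cancel_left] at h
  · have h := log_le_sub_one_of_pos hq
    rwa [div_sub_one hx.ne', add_sub_cancel_left] at h

lemma harmonic_sub_log_mem_Icc (n : ℕ) :
    (harmonic n : ℝ) - log (n + 1) ∈ Set.Icc 0 1 := by
  have hlow := log_add_one_le_harmonic n
  have hup := harmonic_le_one_add_log n
  have hmono : log n ≤ log (n + 1) := by
    rcases n.eq_zero_or_pos with rfl | hn
    · simp
    · exact log_le_log (by positivity) (by linarith)
  push_cast at hlow
  constructor <;> linarith

lemma log_add_one_div_mul_le {x : ℝ} (hx : 1 ≤ x) :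
    log (x + 1) / (x * (x + 1)) ≤ 6 * (1 / √x - 1 / √(x + 1)) := by
  set s := √x
  set t := √(x + 1)
  have hs2 : s ^ 2 = x := sq_sqrt (by linarith)
  have ht2 : t ^ 2 = x + 1 := sq_sqrt (by linarith)
  have hs : 1 ≤ s := one_le_sqrt.mpr hx
  have ht : 0 < t := sqrt_pos.mpr (by linarith)
  have hlog : log (x + 1) ≤ 2 * t := by
    rw [← ht2, log_pow, Nat.cast_ofNat]
    linarith [log_le_sub_one_of_pos ht]
  have hts : t ≤ 2 * s := by nlinarith
  have hst : s ≤ t := by nlinarith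
  -- √x (√(x+1) - √x) = √x / (√(x+1) + √x) ≥ 1/3
  have key : 1 ≤ 3 * s * (t - s) := by nlinarith
  rw [show x * (x + 1) = s ^ 2 * t ^ 2 by rw [hs2, ht2], div_le_iff₀ (by positivity)]
  calc log (x + 1) ≤ 2 * t := hlog
    _ ≤ 6 * (1 / s - 1 / t) * (s ^ 2 * t ^ 2) := by
      rw [show 6 * (1 / s - 1 / t) * (s ^ 2 * t ^ 2) = 6 * s * t * (t - s) by
        field_simp]
      nlinarith

lemma log_add_one_div_sub_half_sq_log_diff_nonneg {x : ℝ} (hx : 0 < x) :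
    0 ≤ log (x + 1) / x - (log (x + 1) ^ 2 - log x ^ 2) / 2 := by
  obtain ⟨-, hgap⟩ := log_add_one_sub_log_mem_Icc hx
  have hc : 0 ≤ log (x + 1) := log_nonneg (by linarith)
  have hsplit : log (x + 1) / x - (log (x + 1) ^ 2 - log x ^ 2) / 2 =
      log (x + 1) * (1 / x - (log (x + 1) - log x)) + (log (x + 1) - log x) ^ 2 / 2 := by
    ring
  rw [hsplit]
  exact add_nonneg (mul_nonneg hc (sub_nonneg.mpr hgap)) (by positivity)

lemma log_add_one_div_sub_half_sq_log_diff_le {x : ℝ} (hx : 1 ≤ x) :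
    log (x + 1) / x - (log (x + 1) ^ 2 - log x ^ 2) / 2 ≤
      6 * (1 / √x - 1 / √(x + 1)) + (1 / x - 1 / (x + 1)) := by
  have hx0 : 0 < x := by linarith
  obtain ⟨hgap_ge, hgap_le⟩ := log_add_one_sub_log_mem_Icc hx0
  set δ := log (x + 1) - log x
  have hc : 0 ≤ log (x + 1) := log_nonneg (by linarith)
  have hsplit : log (x + 1) / x - (log (x + 1) ^ 2 - log x ^ 2) / 2 =
      log (x + 1) * (1 / x - δ) + δ ^ 2 / 2 := by
    ring
  have hfrac : 1 / x - 1 / (x + 1) = 1 / (x * (x + 1)) := by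
    field_simp
    ring
  have hfirst : log (x + 1) * (1 / x - δ) ≤ log (x + 1) / (x * (x + 1)) := by
    calc log (x + 1) * (1 / x - δ) ≤ log (x + 1) * (1 / x - 1 / (x + 1)) := by gcongr
      _ = log (x + 1) / (x * (x + 1)) := by rw [hfrac, mul_one_div]
  have hsecond : δ ^ 2 / 2 ≤ 1 / x - 1 / (x + 1) := by
    have hδ : 0 ≤ δ := le_trans (by positivity) hgap_ge
    calc δ ^ 2 / 2 ≤ (1 / x) ^ 2 / 2 := by gcongr
      _ ≤ 1 / x - 1 / (x + 1) := by
        rw [hfrac, div_pow, one_pow, div_div, div_le_div_iff_of_pos_left one_pos (by positivity)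
          (by positivity)]
        nlinarith
  rw [hsplit]
  linarith [log_add_one_div_mul_le hx]

noncomputable def logHarmonicError (n : ℕ) : ℝ :=
  ∑ k ∈ range n, log (k + 2) / (k + 1) - log (n + 1) ^ 2 / 2

lemma logHarmonicError_succ (n : ℕ) :
    logHarmonicError (n + 1) = logHarmonicError n +
      (log ((n + 1 : ℝ) + 1) / (n + 1) - (log ((n + 1 : ℝ) + 1) ^ 2 - log (n + 1) ^ 2) / 2) := by
  simp only [logHarmonicError, sum_range_succ]
  push_cast
  ring_nf

lemma logHarmonicError_nonneg (n : ℕ) : 0 ≤ logHarmonicError n := by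
  have hmono : Monotone logHarmonicError := monotone_nat_of_le_succ fun n => by
    rw [logHarmonicError_succ]
    linarith [log_add_one_div_sub_half_sq_log_diff_nonneg (x := n + 1) (by positivity)]
  simpa [logHarmonicError] using hmono (Nat.zero_le n)

lemma logHarmonicError_le (n : ℕ) : logHarmonicError n ≤ 7 := by
  let u : ℕ → ℝ := fun n => logHarmonicError n + 6 / √(n + 1) + 1 / (n + 1)
  have hanti : Antitone u := antitone_nat_of_succ_le fun n => by
    have h := log_add_one_div_sub_half_sq_log_diff_le (x := n + 1) (by simp)
    simp only [mul_sub, mul_one_div] at h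
    simp only [u, logHarmonicError_succ]
    push_cast
    linarith
  have h0 : u 0 = 7 := by norm_num [u, logHarmonicError]
  have : 0 ≤ 6 / √(n + 1 : ℝ) + 1 / (n + 1) := by positivity
  linarith [hanti (Nat.zero_le n)]

lemma prod_Icc_natCast_sub {M : Type*} [CommMonoid M] (f : ℝ → M) {i d : ℕ} (h : i ≤ d) :
    ∏ l ∈ Icc (i + 1) d, f ((d : ℝ) - l) = ∏ k ∈ range (d - i), f k := by
  refine prod_nbij' (fun l => d - l) (fun k => d - k) ?_ ?_ ?_ ?_ fun l hl => ?_
  iterate 4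
    intro x hx
    simp only [mem_Icc, mem_range] at *
    omega
  · rw [Nat.cast_sub (mem_Icc.mp hl).2]

lemma two_mul_log_sqrt_mul_prod_sub {C : ℝ} (hC : 0 < C) (n : ℕ) :
    2 * log (√((n : ℝ) + 1) * ∏ k ∈ range n, (C * ((k : ℝ) + 2)) ^ (1 / (2 * ((k : ℝ) + 1)))) -
        (1 + log C) * log ((n : ℝ) + 1) - log ((n : ℝ) + 1) ^ 2 / 2 =
      log C * ((harmonic n : ℝ) - log (n + 1)) + logHarmonicError n := by
  have hfac : ∀ k : ℕ, 0 < C * ((k : ℝ) + 2) := fun k => by positivity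
  rw [log_mul (by positivity) (prod_pos fun k _ => (rpow_pos_of_pos (hfac k) _)).ne',
    log_sqrt (by positivity), log_prod fun k _ => (rpow_pos_of_pos (hfac k) _).ne']
  simp only [log_rpow (hfac _), logHarmonicError, harmonic, Rat.cast_sum, Rat.cast_inv,
    Rat.cast_natCast]
  have hterm : ∀ k : ℕ, 1 / (2 * ((k : ℝ) + 1)) * log (C * ((k : ℝ) + 2)) =
      (log C * ((k + 1 : ℕ) : ℝ)⁻¹ + log ((k : ℝ) + 2) / ((k : ℝ) + 1)) / 2 := fun k => by
    rw [log_mul hC.ne' (by positivity)]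
    push_cast
    field_simp
  rw [sum_congr rfl fun k _ => hterm k, ← sum_div, sum_add_distrib, ← mul_sum]
  ring

/-- Corollary 1 of the paper, second part. With `C = exp (-6)` and
`g_d(i) = √(d-i+1) ∏_{l=i+1}^d (C(d-l+2))^{1/(2(d-l+1))}`, one has
`2 log g_d(i) = (1 + log C) log(d-i+1) + log²(d-i+1)/2 + O(1)` uniformly in `d` and `i`. -/
theorem log_worst_case_shape_estimate :
    ∃ K : ℝ, 0 < K ∧
      ∀ (d i : ℕ), 1 ≤ d → 1 ≤ i → i ≤ d →
        |2 * Real.log (Real.sqrt ((d : ℝ) - (i : ℝ) + 1) *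
              ∏ l ∈ Finset.Icc (i + 1) d,
                (Real.exp (-6) * ((d : ℝ) - (l : ℝ) + 2))
                  ^ (1 / (2 * ((d : ℝ) - (l : ℝ) + 1)))) -
            (1 + Real.log (Real.exp (-6))) * Real.log ((d : ℝ) - (i : ℝ) + 1) -
            (Real.log ((d : ℝ) - (i : ℝ) + 1)) ^ 2 / 2| ≤ K := by
  refine ⟨7, by norm_num, fun d i _ _ hid => ?_⟩
  have hprod := prod_Icc_natCast_sub
    (fun t : ℝ => (exp (-6) * (t + 2)) ^ (1 / (2 * (t + 1)))) hid
  beta_reduce at hprod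
  rw [hprod, ← Nat.cast_sub hid, two_mul_log_sqrt_mul_prod_sub (exp_pos _), log_exp]
  obtain ⟨hH₀, hH₁⟩ := harmonic_sub_log_mem_Icc (d - i)
  have hF₀ := logHarmonicError_nonneg (d - i)
  have hF₁ := logHarmonicError_le (d - i)
  rw [abs_le]
  constructor <;> linarith
end

section
/- Let (b_1,…,b_d) be linearly independent vectors of ℝ^n and let i ∈ {1,…,d}. Then the number of integer vectors (y_i,…,y_d) ∈ (ℤ∖{0})^{d−i+1} satisfying Σ_{j=i}^{d} y_j²‖b_j*‖² ≤ (4/5)‖b_1‖² is at most the number of integer vectors (z_i,…,z_d) ∈ ℤ^{d−i+1} satisfying ‖Σ_{j=i}^{d} z_j b_j(i)‖ ≤ ‖b_1‖. -/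
open scoped BigOperators

/-- Gram–Schmidt orthogonalisation `bᵢ*` of a finite family of vectors. -/
noncomputable def gso {n d : ℕ} (b : Fin d → EuclideanSpace ℝ (Fin n)) (i : Fin d) :
    EuclideanSpace ℝ (Fin n) :=
  @InnerProductSpace.gramSchmidt ℝ (EuclideanSpace ℝ (Fin n)) _ _ _ (Fin d) _ _ (Finite.to_wellFoundedLT) b i

/-- `gsProj b i j` is `b_j(i)`: the orthogonal projection of `b j` onto the orthogonal
complement of the span of `b k`, `k < i`. -/
noncomputable def gsProj {n d : ℕ} (b : Fin d → EuclideanSpace ℝ (Fin n)) (i j : Fin d) :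
    EuclideanSpace ℝ (Fin n) :=
  (Submodule.orthogonalProjectionOnto (Submodule.span ℝ (b '' {k | k < i}))ᗮ (b j) : EuclideanSpace ℝ (Fin n))

/-- A family is HKZ-reduced when, for every `i`, `‖bᵢ*‖` is the minimum of the lattice
generated by `b_i(i), …, b_d(i)`,  i.e. every nonzero integer combination of the projected
vectors is at least as long as `bᵢ*`. -/
def IsHKZReduced {n d : ℕ} (b : Fin d → EuclideanSpace ℝ (Fin n)) : Prop :=
  ∀ i : Fin d, ∀ x : Fin d → ℤ,
    (∑ j ∈ Finset.Ici i, (x j : ℝ) • gsProj b i j) ≠ 0 →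
    ‖gso b i‖ ≤ ‖∑ j ∈ Finset.Ici i, (x j : ℝ) • gsProj b i j‖

/-- A family is `k`-BKZ-reduced when every block `(b_i(i), …, b_{i+k-1}(i))` is HKZ-reduced. -/
def IsBKZReduced {n d : ℕ} (k : ℕ) (b : Fin d → EuclideanSpace ℝ (Fin n)) : Prop :=
  ∀ i : Fin d, ∀ h : (i : ℕ) + k ≤ d,
    IsHKZReduced (fun t : Fin k => gsProj b i ⟨(i : ℕ) + (t : ℕ), by have := t.isLt; omega⟩)

/-- The minimum of the lattice generated by the family `b`. -/
noncomputable def latticeMin {n d : ℕ} (b : Fin d → EuclideanSpace ℝ (Fin n)) : ℝ :=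
  sInf {r | ∃ x : Fin d → ℤ, (∑ i, (x i : ℝ) • b i) ≠ 0 ∧ r = ‖∑ i, (x i : ℝ) • b i‖}

/-!
Write `c_k(z) = z_k + ∑_{j > k} z_j μ_{j,k}` for the coordinates of `∑_j z_j b_j(i)` in the
orthogonal family `(b_k*)_{k ≥ i}`, so that `‖∑_j z_j b_j(i)‖² = ∑_k c_k(z)² ‖b_k*‖²`. Since `c` is
unitriangular, for every `y` with nonzero entries back-substitution yields an integer `z` with
`|c_k(z)| ≤ |y_k|` whose coordinates `c_k(z)` round away from zero to `y_k`. Hence every `y` of the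
first set is the image of a `z` of the second set under `z ↦ roundAway ∘ c(z)`, and the second set
is finite because the `b_j(i)` are linearly independent.
-/

open Finset InnerProductSpace

noncomputable def roundAway (c : ℝ) : ℤ := if 0 < c then ⌈c⌉ else ⌊c⌋

/-- `z + θ` lies in `(y - 1, y]` for `y > 0` and in `[y, y + 1)` for `y < 0`, where
`z = roundShift y θ`. -/
noncomputable def roundShift (y : ℤ) (θ : ℝ) : ℤ := if 0 < y then ⌊y - θ⌋ else ⌈y - θ⌉

theorem roundShift_add_spec {y : ℤ} (hy : y ≠ 0) (θ : ℝ) :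
    roundAway (roundShift y θ + θ) = y ∧ |(roundShift y θ + θ : ℝ)| ≤ |(y : ℝ)| := by
  rcases hy.lt_or_gt with hneg | hpos
  · have hy1 : (y : ℝ) ≤ -1 := by exact_mod_cast Int.le_sub_one_iff.mpr hneg
    have hlo := Int.le_ceil ((y : ℝ) - θ)
    have hhi := Int.ceil_lt_add_one ((y : ℝ) - θ)
    rw [roundShift, if_neg hneg.not_gt, roundAway, if_neg (by linarith),
      abs_of_neg (by linarith), abs_of_neg (by linarith)]
    exact ⟨Int.floor_eq_iff.mpr ⟨by linarith, by linarith⟩, by linarith⟩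
  · have hy1 : (1 : ℝ) ≤ y := by exact_mod_cast hpos
    have hlo := Int.sub_one_lt_floor ((y : ℝ) - θ)
    have hhi := Int.floor_le ((y : ℝ) - θ)
    rw [roundShift, if_pos hpos, roundAway, if_pos (by linarith),
      abs_of_pos (by linarith), abs_of_pos (by linarith)]
    exact ⟨Int.ceil_eq_iff.mpr ⟨by linarith, by linarith⟩, by linarith⟩

section Triangular

variable {ι : Type*} [LinearOrder ι] [LocallyFiniteOrderTop ι]

def triangularCoord (μ : ι → ι → ℝ) (z : ι → ℝ) (k : ι) : ℝ :=
  z k + ∑ j ∈ Ioi k, z j * μ j k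

variable [WellFoundedGT ι]

-- Back-substitution from the top index: `z k` only depends on the `z j` with `j > k`.
noncomputable def roundingSolution (μ : ι → ι → ℝ) (y : ι → ℤ) : ι → ℤ :=
  wellFounded_gt.fix fun k z =>
    roundShift (y k) (∑ j ∈ (Ioi k).attach, (z j (mem_Ioi.mp j.2) : ℝ) * μ j k)

theorem roundingSolution_eq (μ : ι → ι → ℝ) (y : ι → ℤ) (k : ι) :
    roundingSolution μ y k =
      roundShift (y k) (∑ j ∈ Ioi k, (roundingSolution μ y j : ℝ) * μ j k) := by
  rw [roundingSolution, WellFounded.fix_eq]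
  exact congrArg _ (sum_attach _ fun j => (roundingSolution μ y j : ℝ) * μ j k)

theorem exists_roundAway_triangularCoord_eq (μ : ι → ι → ℝ) {y : ι → ℤ} (hy : ∀ k, y k ≠ 0) :
    ∃ z : ι → ℤ, ∀ k, roundAway (triangularCoord μ (fun j => z j) k) = y k ∧
      |triangularCoord μ (fun j => z j) k| ≤ |(y k : ℝ)| := by
  refine ⟨roundingSolution μ y, fun k => ?_⟩
  rw [triangularCoord, roundingSolution_eq μ y k]
  exact roundShift_add_spec (hy k) _

end Triangular

theorem norm_sum_smul_sq_of_pairwise_orthogonal {ι E : Type*} [NormedAddCommGroup E]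
    [InnerProductSpace ℝ E] {v : ι → E} (hv : Pairwise fun j k => ⟪v j, v k⟫_ℝ = 0)
    (s : Finset ι) (c : ι → ℝ) :
    ‖∑ k ∈ s, c k • v k‖ ^ 2 = ∑ k ∈ s, c k ^ 2 * ‖v k‖ ^ 2 := by
  rw [← real_inner_self_eq_norm_sq, sum_inner]
  refine sum_congr rfl fun k hk => ?_
  rw [inner_sum, sum_eq_single k (fun l _ hlk => by simp [real_inner_smul_left,
    real_inner_smul_right, hv hlk.symm]) (absurd hk), real_inner_smul_left,
    real_inner_smul_right, real_inner_self_eq_norm_sq]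
  ring

theorem setFinite_intCombination_norm_le {ι E : Type*} [Fintype ι] [NormedAddCommGroup E]
    [NormedSpace ℝ E] {v : ι → E} (hv : LinearIndependent ℝ v) (R : ℝ) :
    {z : ι → ℤ | ‖∑ j, (z j : ℝ) • v j‖ ≤ R}.Finite := by
  obtain ⟨K, -, hK⟩ := (Fintype.linearCombination ℝ v).exists_antilipschitzWith
    (LinearMap.ker_eq_bot.mpr (linearIndependent_iff_injective_fintypeLinearCombination.mp hv))
  have hcast : Isometry fun z : ι → ℤ => ((↑) : ℤ → ℝ) ∘ z :=
    (Isometry.of_dist_eq Int.dist_cast_real).postcomp_pi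
  have hbdd := (hK.comp hcast.antilipschitz).isBounded_preimage
    (Metric.isBounded_closedBall (x := 0) (r := R))
  refine (Metric.finite_isBounded_inter_isClosed DiscreteTopology.isDiscrete hbdd
    isClosed_univ).subset fun z hz => ⟨?_, trivial⟩
  simpa [Fintype.linearCombination_apply] using hz

section GramSchmidt

variable {n d : ℕ} (b : Fin d → EuclideanSpace ℝ (Fin n))

noncomputable def gsCoeff (j k : Fin d) : ℝ := ⟪gso b k, b j⟫_ℝ / ‖gso b k‖ ^ 2

theorem self_eq_gso_add_sum (j : Fin d) :
    b j = gso b j + ∑ k ∈ Iio j, gsCoeff b j k • gso b k :=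
  gramSchmidt_def'' ℝ b j

theorem gso_orthogonal {j k : Fin d} (h : j ≠ k) : ⟪gso b j, gso b k⟫_ℝ = 0 :=
  gramSchmidt_orthogonal ℝ b h

theorem gsProj_eq_starProjection (i j : Fin d) :
    gsProj b i j = (Submodule.span ℝ (b '' {k | k < i}))ᗮ.starProjection (b j) := rfl

theorem starProjection_gso (i k : Fin d) :
    (Submodule.span ℝ (b '' {k | k < i}))ᗮ.starProjection (gso b k) =
      if i ≤ k then gso b k else 0 := by
  have hspan : Submodule.span ℝ (b '' {k | k < i}) = Submodule.span ℝ (gso b '' Set.Iio i) :=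
    (span_gramSchmidt_Iio ℝ b i).symm
  split_ifs with hik
  · refine Submodule.starProjection_eq_self_iff.mpr ?_
    rw [hspan, ← Submodule.span_singleton_le_iff_mem, ← Submodule.isOrtho_iff_le,
      Submodule.isOrtho_comm, Submodule.isOrtho_span]
    rintro _ ⟨t, ht, rfl⟩ _ rfl
    exact gso_orthogonal b (ht.trans_le hik).ne
  · refine (Submodule.starProjection_apply_eq_zero_iff _).mpr ?_
    rw [Submodule.orthogonal_orthogonal, hspan]
    exact Submodule.subset_span ⟨k, not_le.mp hik, rfl⟩

theorem gsProj_eq_gso_add_sum {i j : Fin d} (hij : i ≤ j) :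
    gsProj b i j = gso b j + ∑ k ∈ Iio j with i ≤ k, gsCoeff b j k • gso b k := by
  rw [gsProj_eq_starProjection, self_eq_gso_add_sum b j, map_add, map_sum, starProjection_gso,
    if_pos hij, sum_filter]
  simp only [map_smul, starProjection_gso, smul_ite, smul_zero]

theorem linearIndependent_gsProj (hb : LinearIndependent ℝ b) (i : Fin d) :
    LinearIndependent ℝ fun j : {j // i ≤ j} => gsProj b i j.1 := by
  set K := Submodule.span ℝ (b '' {k | k < i})
  have hdisj : Disjoint (Submodule.span ℝ (Set.range (b ∘ Subtype.val (p := (i ≤ ·)))))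
      (LinearMap.ker Kᗮ.starProjection.toLinearMap) := by
    rw [Submodule.ker_starProjection, Submodule.orthogonal_orthogonal,
      Set.range_comp, Subtype.range_coe_subtype]
    exact hb.disjoint_span_image
      (Set.disjoint_left.mpr fun k (hik : i ≤ k) (hki : k < i) => hik.not_gt hki)
  have hmap := (hb.comp _ Subtype.val_injective).map hdisj
  exact hmap

variable (i : Fin d)

theorem sum_smul_gsProj (a : {j // i ≤ j} → ℝ) :
    ∑ j, a j • gsProj b i j.1 =
      ∑ k, triangularCoord (fun j k => gsCoeff b j.1 k.1) a k • gso b k.1 := by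
  have hproj (j : {j // i ≤ j}) :
      gsProj b i j.1 = gso b j.1 + ∑ k ∈ Iio j, gsCoeff b j.1 k.1 • gso b k.1 := by
    rw [gsProj_eq_gso_add_sum b j.2, subtype_Iio_eq,
      sum_subtype_eq_sum_filter fun k => gsCoeff b j.1 k • gso b k]
  simp only [hproj, triangularCoord, smul_add, add_smul, sum_add_distrib, smul_sum, sum_smul,
    smul_smul]
  congr 1
  exact sum_comm' fun j k => by simp [and_comm]

theorem norm_sum_smul_gsProj_sq (a : {j // i ≤ j} → ℝ) :
    ‖∑ j, a j • gsProj b i j.1‖ ^ 2 =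
      ∑ k, triangularCoord (fun j k => gsCoeff b j.1 k.1) a k ^ 2 * ‖gso b k.1‖ ^ 2 := by
  rw [sum_smul_gsProj]
  exact norm_sum_smul_sq_of_pairwise_orthogonal
    (fun j k hjk => gso_orthogonal b (Subtype.val_injective.ne hjk)) _ _

end GramSchmidt

/-- Lemma 2 of the paper. The number of integer vectors with all
coordinates nonzero in the shrunk ellipsoid is at most the number of integer points in the
enumeration ellipsoid of Kannan's algorithm. -/
theorem kannan_enumeration_lower_bound_aux
    (n d : ℕ) (b : Fin d → EuclideanSpace ℝ (Fin n)) (hb : LinearIndependent ℝ b)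
    (i : Fin d) :
    ({y : {j : Fin d // i ≤ j} → ℤ |
        (∀ j, y j ≠ 0) ∧
        ∑ j, (y j : ℝ) ^ 2 * ‖gso b j.1‖ ^ 2 ≤ 4 / 5 * ‖b ⟨0, i.pos⟩‖ ^ 2}).ncard ≤
    ({z : {j : Fin d // i ≤ j} → ℤ |
        ‖∑ j, (z j : ℝ) • gsProj b i j.1‖ ≤ ‖b ⟨0, i.pos⟩‖}).ncard := by
  set B := ‖b ⟨0, i.pos⟩‖
  set μ := fun j k : {j // i ≤ j} => gsCoeff b j.1 k.1
  set c := fun (z : {j // i ≤ j} → ℤ) => triangularCoord μ fun j => (z j : ℝ)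
  have hfin := setFinite_intCombination_norm_le (linearIndependent_gsProj b hb i) B
  refine (Set.ncard_le_ncard ?_ (hfin.image fun z k => roundAway (c z k))).trans
    (Set.ncard_image_le hfin)
  rintro y ⟨hy0, hyB⟩
  obtain ⟨z, hz⟩ := exists_roundAway_triangularCoord_eq μ hy0
  refine ⟨z, ?_, funext fun k => (hz k).1⟩
  have : ‖∑ j, (z j : ℝ) • gsProj b i j.1‖ ^ 2 ≤ B ^ 2 := calc
    _ = ∑ k, c z k ^ 2 * ‖gso b k.1‖ ^ 2 := norm_sum_smul_gsProj_sq b i _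
    _ ≤ ∑ k, (y k : ℝ) ^ 2 * ‖gso b k.1‖ ^ 2 :=
      sum_le_sum fun k _ => mul_le_mul_of_nonneg_right (sq_le_sq.mpr (hz k).2) (sq_nonneg _)
    _ ≤ 4 / 5 * B ^ 2 := hyB
    _ ≤ B ^ 2 := by linarith [sq_nonneg B]
  exact (pow_le_pow_iff_left₀ (norm_nonneg _) (norm_nonneg _) two_ne_zero).mp this
end

section
/- Let b ≥ 2 be an integer and consider the function g(x) = −log x + log(x+1)·(1 − (b−1)/x) on ℝ_{>0}. If b ≥ 3, then g is monotonically increasing on [b, ∞); if b = 2, then g is monotonically increasing on [4, ∞). -/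
/-!
With `c = b - 1`, the derivative of `g` is `(c (x+1) log(x+1) - (c+1) x) / (x² (x+1))`, so it
suffices that `(c+1) x ≤ c (x+1) log(x+1)` on the interval `[a, ∞)`. Since `(x+1) log(x+1)` grows
at least like `(x+1) log(a+1) + (x - a)`, this inequality propagates from `x = a` as soon as
`c log(a+1) ≥ 1`. At the left endpoint it reduces to `b² ≤ (b² - 1) log(b+1)` for `b ≥ 3`
(from `log 4 > 9/8`) and to `8 ≤ 5 log 5` for `b = 2` (from `e⁸ < 5⁵`).
-/

open Real Set

lemma log_add_one_ge_of_le {a x : ℝ} (ha : -1 < a) (hax : a ≤ x) :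
    log (a + 1) + (x - a) / (x + 1) ≤ log (x + 1) := by
  have ha1 : 0 < a + 1 := by linarith
  have hx1 : 0 < x + 1 := by linarith
  have h := one_sub_inv_le_log_of_pos (div_pos hx1 ha1)
  rw [log_div hx1.ne' ha1.ne', inv_div] at h
  have : 1 - (a + 1) / (x + 1) = (x - a) / (x + 1) := by field_simp; ring
  linarith

lemma mul_le_mul_log_add_one_of_le {c a x : ℝ} (hc : 0 ≤ c) (ha : -1 < a) (hax : a ≤ x)
    (hslope : 1 ≤ c * log (a + 1)) (hbase : (c + 1) * a ≤ c * (a + 1) * log (a + 1)) :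
    (c + 1) * x ≤ c * (x + 1) * log (x + 1) := by
  have hx1 : 0 < x + 1 := by linarith
  have hgrowth : (x + 1) * log (a + 1) + (x - a) ≤ (x + 1) * log (x + 1) := by
    have h := mul_le_mul_of_nonneg_left (log_add_one_ge_of_le ha hax) hx1.le
    rwa [mul_add, mul_div_cancel₀ _ hx1.ne'] at h
  nlinarith [mul_le_mul_of_nonneg_left hgrowth hc, mul_le_mul_of_nonneg_right hslope (sub_nonneg.2 hax)]

lemma hasDerivAt_neg_log_add_log_add_one_mul {c x : ℝ} (hx : 0 < x) :
    HasDerivAt (fun x : ℝ => -log x + log (x + 1) * (1 - c / x))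
      ((c * (x + 1) * log (x + 1) - (c + 1) * x) / (x ^ 2 * (x + 1))) x := by
  have hx1 : 0 < x + 1 := by linarith
  have hlog : HasDerivAt (fun y : ℝ => log (y + 1)) (x + 1)⁻¹ x := by
    simpa using ((hasDerivAt_id x).add_const 1).log hx1.ne'
  have hfactor : HasDerivAt (fun y : ℝ => 1 - c / y) (c / x ^ 2) x := by
    simpa [div_eq_mul_inv] using ((hasDerivAt_inv hx.ne').const_mul c).const_sub 1
  refine ((hasDerivAt_log hx.ne').neg.add (hlog.mul hfactor)).congr_deriv ?_
  field_simp
  ring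

lemma monotoneOn_neg_log_add_log_add_one_mul {c a : ℝ} (ha : 0 < a)
    (hkey : ∀ x, a ≤ x → (c + 1) * x ≤ c * (x + 1) * log (x + 1)) :
    MonotoneOn (fun x : ℝ => -log x + log (x + 1) * (1 - c / x)) (Ici a) := by
  have hderiv : ∀ x ∈ Ici a, HasDerivAt (fun x : ℝ => -log x + log (x + 1) * (1 - c / x))
      ((c * (x + 1) * log (x + 1) - (c + 1) * x) / (x ^ 2 * (x + 1))) x :=
    fun x hx => hasDerivAt_neg_log_add_log_add_one_mul (ha.trans_le hx)
  refine monotoneOn_of_hasDerivWithinAt_nonneg (convex_Ici a)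
    (fun x hx => (hderiv x hx).continuousAt.continuousWithinAt)
    (fun x hx => (hderiv x (interior_subset hx)).hasDerivWithinAt) fun x hx => ?_
  rw [interior_Ici, mem_Ioi] at hx
  have hx0 : 0 < x := ha.trans hx
  exact div_nonneg (sub_nonneg.2 (hkey x hx.le)) (by positivity)

lemma nine_eighths_lt_log_four : 9 / 8 < log 4 := by
  rw [show (4 : ℝ) = 2 ^ 2 by norm_num, log_pow]
  linarith [log_two_gt_d9]

lemma eight_fifths_le_log_five : 8 / 5 ≤ log 5 := by
  rw [le_log_iff_exp_le (by norm_num)]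
  refine le_of_pow_le_pow_left₀ (n := 5) (by norm_num) (by norm_num) ?_
  rw [← exp_nat_mul, show ((5 : ℕ) : ℝ) * (8 / 5) = (8 : ℕ) * 1 by norm_num, exp_nat_mul]
  calc exp 1 ^ 8 ≤ 2.7182818286 ^ 8 := pow_le_pow_left₀ (exp_pos 1).le exp_one_lt_d9.le 8
    _ ≤ 5 ^ 5 := by norm_num

theorem monotone_aux_function_general (b : ℕ) :
    (3 ≤ b →
      MonotoneOn (fun x : ℝ => -Real.log x + Real.log (x + 1) * (1 - ((b : ℝ) - 1) / x))
        (Set.Ici (b : ℝ))) ∧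
    (b = 2 →
      MonotoneOn (fun x : ℝ => -Real.log x + Real.log (x + 1) * (1 - ((b : ℝ) - 1) / x))
        (Set.Ici (4 : ℝ))) := by
  constructor
  · intro hb
    have hb3 : (3 : ℝ) ≤ b := by exact_mod_cast hb
    have hlog : 9 / 8 ≤ log ((b : ℝ) + 1) :=
      nine_eighths_lt_log_four.le.trans (log_le_log (by norm_num) (by linarith))
    refine monotoneOn_neg_log_add_log_add_one_mul (by linarith) fun x hx => ?_
    refine mul_le_mul_log_add_one_of_le (by linarith) (by linarith) hx (by nlinarith) ?_
    nlinarith [mul_le_mul_of_nonneg_left hlog (by nlinarith : (0 : ℝ) ≤ (b - 1) * (b + 1))]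
  · rintro rfl
    refine monotoneOn_neg_log_add_log_add_one_mul (by norm_num) fun x hx => ?_
    have hlog : 8 / 5 ≤ log ((4 : ℝ) + 1) := by norm_num [eight_fifths_le_log_five]
    exact mul_le_mul_log_add_one_of_le (by norm_num) (by norm_num) hx
      (by norm_num; linarith) (by norm_num; linarith)

/-- Lemma 7 of the paper. The function
`g(x) = -log x + log(x+1)(1-(b-1)/x)` is monotonically increasing on `[b,∞)` when `b ≥ 3`,
and on `[4,∞)` when `b = 2`. -/
theorem monotone_aux_function (b : ℕ) (hb : 2 ≤ b) :
    (3 ≤ b →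
      MonotoneOn (fun x : ℝ => -Real.log x + Real.log (x + 1) * (1 - ((b : ℝ) - 1) / x))
        (Set.Ici (b : ℝ))) ∧
    (b = 2 →
      MonotoneOn (fun x : ℝ => -Real.log x + Real.log (x + 1) * (1 - ((b : ℝ) - 1) / x))
        (Set.Ici (4 : ℝ))) :=
  monotone_aux_function_general b
end

section
/- Let a ≥ 8 and b with 2 ≤ b < a be integers. Then Σ_{x=b}^{a−1} (log a − log x + log(x+1)·(1 − (b−1)/x)) ≤ (a−b)·log(a−b+1) + (a−b)·(log(a²/((a−1)(a−b+1))) − ((b−1)/(a−1))·log a). -/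
/-!
Induction on `a` with `b` fixed. The right-hand side simplifies to
`(a-b)((2a-b-1)/(a-1) log a - log(a-1))`, and passing from `a` to `a+1` increases the gap between
the two sides by `(a-b)/(a(a-1))` times
`Q = (b-1)(log(a+1) - a log(1+1/a)) - a(a-1) log(a²/(a²-1))`.
By `log x ≤ x - 1` both `a log(1+1/a)` and `a(a-1) log(a²/(a²-1))` are at most `1`, so `Q ≥ 0`
as soon as `(b-1)(log(a+1) - 1) ≥ 1`. For `b ≥ 3` this holds from `a = b+1` on, where the two
sides are equal. For `b = 2` it needs `log(a+1) ≥ 2`, and the induction starts at `a = 8`, checked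
numerically (the inequality fails for `b = 2`, `4 ≤ a ≤ 7`).
-/

open Real Finset

noncomputable def compensationSum (a b : ℕ) : ℝ :=
  ∑ x ∈ Ico b a, (log a - log x + log ((x : ℝ) + 1) * (1 - ((b : ℝ) - 1) / (x : ℝ)))

noncomputable def compensationBound (a b : ℕ) : ℝ :=
  ((a : ℝ) - b) * log ((a : ℝ) - b + 1) +
    ((a : ℝ) - b) * (log ((a : ℝ) ^ 2 / (((a : ℝ) - 1) * ((a : ℝ) - b + 1))) -
      ((b : ℝ) - 1) / ((a : ℝ) - 1) * log a)

lemma log_add_one_sub_log_le {x : ℝ} (hx : 0 < x) : log (x + 1) - log x ≤ x⁻¹ := by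
  have h := log_le_sub_one_of_pos (show 0 < (x + 1) / x by positivity)
  rwa [log_div (by positivity) hx.ne', add_div, div_self hx.ne', add_sub_cancel_left,
    one_div] at h

lemma two_mul_log_sub_log_sub_one_sub_log_add_one_le {x : ℝ} (hx : 1 < x) :
    2 * log x - log (x - 1) - log (x + 1) ≤ ((x - 1) * (x + 1))⁻¹ := by
  have hx1 : 0 < x - 1 := by linarith
  have h := log_le_sub_one_of_pos (show 0 < x ^ 2 / ((x - 1) * (x + 1)) by positivity)
  rw [log_div (by positivity) (by positivity), log_mul hx1.ne' (by positivity), log_pow] at h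
  have hsub : x ^ 2 / ((x - 1) * (x + 1)) - 1 = ((x - 1) * (x + 1))⁻¹ := by
    field_simp; ring
  push_cast at h
  linarith

lemma compensation_increment_nonneg {a b : ℝ} (ha : 1 < a) (hb : 1 ≤ b)
    (hlog : 1 ≤ (b - 1) * (log (a + 1) - 1)) :
    0 ≤ (a - 1) * (a - b + 1) * log (a + 1) - a * (2 * a - b - 1) * log a +
      a * (a - 1) * log (a - 1) := by
  have ha0 : 0 < a := by linarith
  have ha1 : 0 < a - 1 := by linarith
  have h₁ : a * (log (a + 1) - log a) ≤ 1 := by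
    calc a * (log (a + 1) - log a) ≤ a * a⁻¹ := by
          gcongr; exact log_add_one_sub_log_le ha0
      _ = 1 := mul_inv_cancel₀ ha0.ne'
  have h₂ : a * (a - 1) * (2 * log a - log (a - 1) - log (a + 1)) ≤ 1 := by
    calc a * (a - 1) * (2 * log a - log (a - 1) - log (a + 1))
        ≤ a * (a - 1) * ((a - 1) * (a + 1))⁻¹ := by
          gcongr; exact two_mul_log_sub_log_sub_one_sub_log_add_one_le ha
      _ = a / (a + 1) := by field_simp
      _ ≤ 1 := by rw [div_le_one (by linarith)]; linarith
  have hsplit : (a - 1) * (a - b + 1) * log (a + 1) - a * (2 * a - b - 1) * log a +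
      a * (a - 1) * log (a - 1) =
        ((b - 1) * (log (a + 1) - 1) - 1) + (b - 1) * (1 - a * (log (a + 1) - log a)) +
          (1 - a * (a - 1) * (2 * log a - log (a - 1) - log (a + 1))) := by
    ring
  have hb₁ : 0 ≤ (b - 1) * (1 - a * (log (a + 1) - log a)) :=
    mul_nonneg (by linarith) (by linarith)
  linarith

lemma compensationBound_eq {a b : ℕ} (ha : 1 < a) (hba : b ≤ a) :
    compensationBound a b =
      ((a : ℝ) - b) * ((2 * a - b - 1) / (a - 1) * log a - log ((a : ℝ) - 1)) := by
  have ha' : (1 : ℝ) < a := by exact_mod_cast ha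
  have hba' : (b : ℝ) ≤ a := by exact_mod_cast hba
  have ha1 : (0 : ℝ) < a - 1 := by linarith
  have hab : (0 : ℝ) < a - b + 1 := by linarith
  rw [compensationBound, log_div (by positivity) (by positivity), log_mul ha1.ne' hab.ne',
    log_pow]
  field_simp
  push_cast
  ring

lemma compensationSum_self (b : ℕ) : compensationSum b b = 0 := by
  simp [compensationSum]

lemma compensationSum_succ {a b : ℕ} (hba : b ≤ a) :
    compensationSum (a + 1) b = compensationSum a b +
      ((a : ℝ) - b + 1) * (log ((a : ℝ) + 1) - log a) +
        log ((a : ℝ) + 1) * (1 - ((b : ℝ) - 1) / a) := by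
  simp only [compensationSum, sum_Ico_succ_top hba, Nat.cast_add_one]
  have hterm : ∀ x ∈ Ico b a,
      log ((a : ℝ) + 1) - log x + log ((x : ℝ) + 1) * (1 - ((b : ℝ) - 1) / x) =
        (log a - log x + log ((x : ℝ) + 1) * (1 - ((b : ℝ) - 1) / x)) +
          (log ((a : ℝ) + 1) - log a) := fun _ _ => by ring
  rw [sum_congr rfl hterm, sum_add_distrib, sum_const, Nat.card_Ico, nsmul_eq_mul,
    Nat.cast_sub hba]
  ring

lemma compensationSum_succ_self {b : ℕ} (hb : 1 ≤ b) :
    compensationSum (b + 1) b = compensationBound (b + 1) b := by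
  have hb0 : (b : ℝ) ≠ 0 := by positivity
  rw [compensationSum_succ le_rfl, compensationSum_self,
    compensationBound_eq (by omega) (by omega)]
  push_cast
  rw [add_sub_cancel_right]
  field_simp
  ring

lemma compensationBound_sub_compensationSum_succ {a b : ℕ} (hb : 1 ≤ b) (hba : b < a) :
    compensationBound (a + 1) b - compensationSum (a + 1) b =
      compensationBound a b - compensationSum a b + ((a : ℝ) - b) / (a * (a - 1)) *
        ((a - 1) * (a - b + 1) * log ((a : ℝ) + 1) - a * (2 * a - b - 1) * log a +
          a * (a - 1) * log ((a : ℝ) - 1)) := by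
  have ha' : (1 : ℝ) < a := by exact_mod_cast hb.trans_lt hba
  have ha0 : (a : ℝ) ≠ 0 := by positivity
  have ha1 : (a : ℝ) - 1 ≠ 0 := by linarith
  rw [compensationSum_succ hba.le, compensationBound_eq (by omega) (by omega),
    compensationBound_eq (by omega) hba.le]
  push_cast
  rw [add_sub_cancel_right]
  field_simp
  ring

lemma compensationSum_le_bound_succ {a b : ℕ} (hb : 1 ≤ b) (hba : b < a)
    (hlog : 1 ≤ ((b : ℝ) - 1) * (log ((a : ℝ) + 1) - 1))
    (h : compensationSum a b ≤ compensationBound a b) :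
    compensationSum (a + 1) b ≤ compensationBound (a + 1) b := by
  have ha' : (1 : ℝ) < a := by exact_mod_cast hb.trans_lt hba
  have hba' : (b : ℝ) ≤ a := by exact_mod_cast hba.le
  have hb' : (1 : ℝ) ≤ b := by exact_mod_cast hb
  have hgap : 0 ≤ ((a : ℝ) - b) / (a * (a - 1)) *
      ((a - 1) * (a - b + 1) * log ((a : ℝ) + 1) - a * (2 * a - b - 1) * log a +
        a * (a - 1) * log ((a : ℝ) - 1)) :=
    mul_nonneg (div_nonneg (by linarith) (by nlinarith))
      (compensation_increment_nonneg ha' hb' hlog)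
  linarith [compensationBound_sub_compensationSum_succ hb hba]

lemma compensationSum_le_bound_of_le {a₀ b : ℕ} (hb : 1 ≤ b) (hba₀ : b < a₀)
    (hlog : 1 ≤ ((b : ℝ) - 1) * (log ((a₀ : ℝ) + 1) - 1))
    (h₀ : compensationSum a₀ b ≤ compensationBound a₀ b) {a : ℕ} (ha : a₀ ≤ a) :
    compensationSum a b ≤ compensationBound a b := by
  have hb' : (0 : ℝ) ≤ b - 1 := by
    rw [sub_nonneg]; exact_mod_cast hb
  induction a, ha using Nat.le_induction with
  | base => exact h₀
  | succ a ha ih =>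
    refine compensationSum_le_bound_succ hb (hba₀.trans_le ha) (hlog.trans ?_) ih
    have : (a₀ : ℝ) ≤ a := by exact_mod_cast ha
    gcongr

lemma two_le_log_nine : 2 ≤ log 9 := by
  rw [le_log_iff_exp_le (by norm_num), show (2 : ℝ) = 1 + 1 by norm_num, exp_add]
  nlinarith [exp_one_lt_three, exp_pos 1]

lemma three_halves_le_log_five : 3 / 2 ≤ log 5 := by
  rw [le_log_iff_exp_le (by norm_num)]
  have h : exp (3 / 2) ^ 2 = exp 1 ^ 3 := by
    rw [← exp_nat_mul, ← exp_nat_mul]; norm_num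
  have h₃ : exp 1 ^ 3 < 25 :=
    (pow_lt_pow_left₀ exp_one_lt_d9 (exp_pos 1).le (by norm_num)).trans (by norm_num)
  nlinarith [exp_pos (3 / 2)]

lemma mul_log_le_mul_log_of_pow_le {x y : ℝ} {m n : ℕ} (hx : 0 < x) (h : x ^ m ≤ y ^ n) :
    m * log x ≤ n * log y := by
  rw [← log_pow, ← log_pow]
  exact log_le_log (by positivity) h

lemma compensationSum_eight_two_le : compensationSum 8 2 ≤ compensationBound 8 2 := by
  rw [compensationBound_eq (by norm_num) (by norm_num)]
  simp only [compensationSum, sum_Ico_eq_sum_range, sum_range_succ, sum_range_zero]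
  norm_num
  have h₄ : log 4 = 2 * log 2 := by
    rw [show (4 : ℝ) = 2 ^ 2 by norm_num, log_pow]; norm_num
  have h₆ : log 6 = log 2 + log 3 := by
    rw [show (6 : ℝ) = 2 * 3 by norm_num, log_mul (by norm_num) (by norm_num)]
  have h₈ : log 8 = 3 * log 2 := by
    rw [show (8 : ℝ) = 2 ^ 3 by norm_num, log_pow]; norm_num
  have h₃ : ((79 : ℕ) : ℝ) * log 2 ≤ ((50 : ℕ) : ℝ) * log 3 :=
    mul_log_le_mul_log_of_pow_le (by norm_num) (by norm_num)
  have h₅ : ((58 : ℕ) : ℝ) * log 2 ≤ ((25 : ℕ) : ℝ) * log 5 :=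
    mul_log_le_mul_log_of_pow_le (by norm_num) (by norm_num)
  have h₇ : ((26 : ℕ) : ℝ) * log 7 ≤ ((73 : ℕ) : ℝ) * log 2 :=
    mul_log_le_mul_log_of_pow_le (by norm_num) (by norm_num)
  push_cast at h₃ h₅ h₇
  linarith [log_pos (show (1 : ℝ) < 2 by norm_num)]

/-- Lemma 8 of the paper. For integers `a ≥ 8` and `2 ≤ b < a`,
`∑_{x=b}^{a-1} (log a - log x + log(x+1)(1-(b-1)/x))
  ≤ (a-b) log(a-b+1) + (a-b)(log(a²/((a-1)(a-b+1))) - ((b-1)/(a-1)) log a)`. -/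
theorem sum_compensation_bound (a b : ℕ) (ha : 8 ≤ a) (hb : 2 ≤ b) (hba : b < a) :
    ∑ x ∈ Finset.Ico b a,
        (Real.log a - Real.log x + Real.log ((x : ℝ) + 1) * (1 - ((b : ℝ) - 1) / (x : ℝ))) ≤
      ((a : ℝ) - (b : ℝ)) * Real.log ((a : ℝ) - (b : ℝ) + 1) +
        ((a : ℝ) - (b : ℝ)) *
          (Real.log ((a : ℝ) ^ 2 / (((a : ℝ) - 1) * ((a : ℝ) - (b : ℝ) + 1))) -
            ((b : ℝ) - 1) / ((a : ℝ) - 1) * Real.log a) := by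
  change compensationSum a b ≤ compensationBound a b
  rcases hb.eq_or_lt with rfl | hb
  · refine compensationSum_le_bound_of_le (by norm_num) (by norm_num) ?_
      compensationSum_eight_two_le ha
    norm_num
    linarith [two_le_log_nine]
  · refine compensationSum_le_bound_of_le (by omega) (Nat.lt_succ_self b) ?_
      (compensationSum_succ_self (by omega)).le hba
    have hb' : (3 : ℝ) ≤ b := by exact_mod_cast hb
    have hlog : log 5 ≤ log ((b : ℝ) + 1 + 1) := log_le_log (by norm_num) (by linarith)
    push_cast
    nlinarith [three_halves_le_log_five]
end
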